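/- Two discourse trees over m EDUs whose nodes carry the same set of interval labels are equal; that is, a discourse tree over m EDUs is uniquely determined by the set of intervals labeling its nodes. -/

import Mathlib

/-- A discourse tree over the EDU interval `(i, j)`: a full binary tree whose
nodes are labeled by intervals, leaves are labeled `(i, i+1)`, and every
internal node labeled `(i, j)` has two children labeled `(i, k)` and `(k, j)`
for some `i < k < j`.  A discourse tree over `m` EDUs is a `DTree 0 m`. -/
inductive DTree : ℕ → ℕ → Type
  | leaf (i : ℕ) : DTree i (i + 1)
  | node {i k j : ℕ} : DTree i k → DTree k j → DTree i j

/-- The set of intervals labeling the nodes of the tree. -/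
def DTree.labelSet : {i j : ℕ} → DTree i j → Finset (ℕ × ℕ)
  | _, _, DTree.leaf i => {(i, i + 1)}
  | _, _, @DTree.node i _ j l r => insert (i, j) (l.labelSet ∪ r.labelSet)

/-!
The root's left child is labelled `(i, k)` with the largest `k < j` such that `(i, k)` is a
label, since every other label starting at `i` lies in the left subtree and ends at most
at `k`. Once the split point is known, the labels of the left (right) subtree are exactly
the labels ending at most at `k` (starting at least at `k`), and induction finishes.
-/

namespace DTree

theorem lt : ∀ {i j : ℕ}, DTree i j → i < j
  | _, _, .leaf i => Nat.lt_succ_self i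
  | _, _, .node l r => l.lt.trans r.lt

theorem mem_labelSet_self : ∀ {i j : ℕ} (T : DTree i j), (i, j) ∈ T.labelSet
  | _, _, .leaf _ => by simp [labelSet]
  | _, _, .node _ _ => by simp [labelSet]

theorem bounds_of_mem_labelSet : ∀ {i j a b : ℕ} (T : DTree i j),
    (a, b) ∈ T.labelSet → i ≤ a ∧ a < b ∧ b ≤ j
  | _, _, _, _, .leaf _, h => by
    simp only [labelSet, Finset.mem_singleton, Prod.mk.injEq] at h
    omega
  | _, _, _, _, .node l r, h => by
    simp only [labelSet, Finset.mem_insert, Finset.mem_union, Prod.mk.injEq] at h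
    have := l.lt
    have := r.lt
    rcases h with h | h | h
    · omega
    · have := l.bounds_of_mem_labelSet h; omega
    · have := r.bounds_of_mem_labelSet h; omega

section Node

variable {i k j : ℕ} (l : DTree i k) (r : DTree k j)

theorem le_split_of_mem_labelSet_node {b : ℕ} (hb : (i, b) ∈ (node l r).labelSet)
    (hbj : b < j) : b ≤ k := by
  simp only [labelSet, Finset.mem_insert, Finset.mem_union, Prod.mk.injEq] at hb
  have := l.lt
  rcases hb with hb | hb | hb
  · omega
  · exact (l.bounds_of_mem_labelSet hb).2.2
  · have := r.bounds_of_mem_labelSet hb; omega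

theorem labelSet_left_eq_filter :
    l.labelSet = (node l r).labelSet.filter (fun x => x.2 ≤ k) := by
  ext ⟨a, b⟩
  simp only [labelSet, Finset.mem_filter, Finset.mem_insert, Finset.mem_union, Prod.mk.injEq]
  have := r.lt
  constructor
  · intro hx
    exact ⟨Or.inr (Or.inl hx), (l.bounds_of_mem_labelSet hx).2.2⟩
  · rintro ⟨hx | hx | hx, hb⟩
    · omega
    · exact hx
    · have := r.bounds_of_mem_labelSet hx; omega

theorem labelSet_right_eq_filter :
    r.labelSet = (node l r).labelSet.filter (fun x => k ≤ x.1) := by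
  ext ⟨a, b⟩
  simp only [labelSet, Finset.mem_filter, Finset.mem_insert, Finset.mem_union, Prod.mk.injEq]
  have := l.lt
  constructor
  · intro hx
    exact ⟨Or.inr (Or.inr hx), (r.bounds_of_mem_labelSet hx).1⟩
  · rintro ⟨hx | hx | hx, ha⟩
    · omega
    · have := l.bounds_of_mem_labelSet hx; omega
    · exact hx

end Node

theorem eq_of_labelSet_eq : ∀ {i j : ℕ} (T₁ T₂ : DTree i j),
    T₁.labelSet = T₂.labelSet → T₁ = T₂
  | _, _, .leaf _, .leaf _, _ => rfl
  | _, _, .leaf _, .node l r, _ => by have := l.lt; have := r.lt; omega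
  | _, _, .node l r, .leaf _, _ => by have := l.lt; have := r.lt; omega
  | i, _, @node _ k _ l r, @node _ k' _ l' r', h => by
    have hl_mem : (i, k) ∈ (node l' r').labelSet := by
      rw [← h]; exact Finset.mem_insert_of_mem (Finset.mem_union_left _ l.mem_labelSet_self)
    have hl'_mem : (i, k') ∈ (node l r).labelSet := by
      rw [h]; exact Finset.mem_insert_of_mem (Finset.mem_union_left _ l'.mem_labelSet_self)
    have hk : k = k' := le_antisymm (l'.le_split_of_mem_labelSet_node r' hl_mem r.lt)
      (l.le_split_of_mem_labelSet_node r hl'_mem r'.lt)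
    subst hk
    have hl : l.labelSet = l'.labelSet := by
      rw [labelSet_left_eq_filter l r, labelSet_left_eq_filter l' r', h]
    have hr : r.labelSet = r'.labelSet := by
      rw [labelSet_right_eq_filter l r, labelSet_right_eq_filter l' r', h]
    rw [eq_of_labelSet_eq l l' hl, eq_of_labelSet_eq r r' hr]

end DTree

theorem labelSet_injective_general (m : ℕ) (T₁ T₂ : DTree 0 m)
    (h : T₁.labelSet = T₂.labelSet) : T₁ = T₂ :=
  T₁.eq_of_labelSet_eq T₂ h

/-- Two discourse trees over `m` EDUs (`m ≥ 1`) whose nodes carry the same set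
of interval labels are equal: a discourse tree is uniquely determined by the
set of intervals labeling its nodes. -/
theorem labelSet_injective (m : ℕ) (hm : 1 ≤ m) (T₁ T₂ : DTree 0 m)
    (h : T₁.labelSet = T₂.labelSet) : T₁ = T₂ :=
  labelSet_injective_general m T₁ T₂ h
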